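/- arXiv:2109.11294 — 3 statements merged into one kernel-verified Lean document; each statement's English description precedes it below -/
import Mathlib

section
/- Let γ > 1 and define P : [0,∞) → ℝ by P(Z) = Z for Z ≤ 1 and P(Z) = (γ-1)/γ + Z^γ/γ for Z > 1, and S : [0,∞) → ℝ by S(Z) = -log Z + 1 for 0 < Z ≤ 1 and S(Z) = 1/Z for Z > 1. Then P and S are continuously differentiable on (0,∞), P'(Z) > 0 for all Z > 0, γP(Z) - P'(Z)Z > 0 for all Z > 0, and S'(Z) = -(1/(γ-1))·(γP(Z) - P'(Z)Z)/Z² for all Z > 0. -/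
open Real Set

/-- The explicit pair `(P, S)` with `P(Z) = Z` for `Z ≤ 1`, `P(Z) = (γ-1)/γ + Z^γ/γ` for
`Z > 1`, and `S(Z) = -log Z + 1` for `Z ≤ 1`, `S(Z) = 1/Z` for `Z > 1`, is `C¹` on `(0,∞)`
and satisfies thermodynamic stability together with the entropy ODE. -/
theorem stmt_1 (γ : ℝ) (hγ : 1 < γ) (P S : ℝ → ℝ)
    (hP : ∀ Z : ℝ, P Z = if Z ≤ 1 then Z else (γ - 1) / γ + Z ^ γ / γ)
    (hS : ∀ Z : ℝ, S Z = if Z ≤ 1 then -Real.log Z + 1 else 1 / Z) :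
    ContDiffOn ℝ 1 P (Set.Ioi 0) ∧ ContDiffOn ℝ 1 S (Set.Ioi 0) ∧
    (∀ Z > 0, 0 < deriv P Z) ∧
    (∀ Z > 0, 0 < γ * P Z - deriv P Z * Z) ∧
    (∀ Z > 0, deriv S Z = -(1 / (γ - 1)) * (γ * P Z - deriv P Z * Z) / Z ^ 2) := by
  have hγ0 : (0:ℝ) < γ := by linarith
  have hγne : γ ≠ 0 := ne_of_gt hγ0
  -- the candidate derivative of P
  set p : ℝ → ℝ := fun Z => if Z ≤ 1 then 1 else Z ^ (γ - 1) with hp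
  -- the candidate derivative of S
  set s : ℝ → ℝ := fun Z => if Z ≤ 1 then -Z⁻¹ else -(Z ^ 2)⁻¹ with hs
  have hg : ∀ x : ℝ, x ≠ 0 → HasDerivAt (fun y : ℝ => (γ - 1) / γ + y ^ γ / γ)
      (x ^ (γ - 1)) x := by
    intro x hx
    have h1 : HasDerivAt (fun y : ℝ => y ^ γ) (γ * x ^ (γ - 1)) x :=
      Real.hasDerivAt_rpow_const (Or.inl hx)
    have h2 := (h1.div_const γ).const_add ((γ - 1) / γ)
    have : γ * x ^ (γ - 1) / γ = x ^ (γ - 1) := by field_simp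
    rwa [this] at h2
  have hPd : ∀ Z ∈ Ioi (0:ℝ), HasDerivAt P (p Z) Z := by
    intro Z hZ
    have hZ0 : (0:ℝ) < Z := hZ
    rcases lt_trichotomy Z 1 with h | h | h
    · have he : P =ᶠ[nhds Z] id := by
        filter_upwards [Iio_mem_nhds h] with x hx
        simp [hP, (mem_Iio.mp hx).le]
      have := (hasDerivAt_id Z).congr_of_eventuallyEq he
      simpa [hp, h.le] using this
    · subst h
      have h1 : HasDerivWithinAt P 1 (Iic 1) 1 := by
        refine ((hasDerivAt_id (1:ℝ)).hasDerivWithinAt).congr ?_ (by simp [hP])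
        intro x hx; simp [hP, (mem_Iic.mp hx)]
      have h2 : HasDerivWithinAt P 1 (Ici 1) 1 := by
        have hg1 := hg 1 one_ne_zero
        rw [Real.one_rpow] at hg1
        refine hg1.hasDerivWithinAt.congr ?_ ?_
        · intro x hx
          rcases eq_or_lt_of_le (mem_Ici.mp hx) with h | h
          · rw [hP, if_pos h.ge]
            rw [← h]; rw [Real.one_rpow]; field_simp; ring
          · rw [hP, if_neg (not_le.mpr h)]
        · rw [hP, if_pos le_rfl, Real.one_rpow]; field_simp; ring
      have := (h1.union h2)
      rw [Iic_union_Ici, hasDerivWithinAt_univ] at this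
      simpa [hp] using this
    · have he : P =ᶠ[nhds Z] fun y : ℝ => (γ - 1) / γ + y ^ γ / γ := by
        filter_upwards [Ioi_mem_nhds h] with x hx
        simp [hP, not_le.mpr (mem_Ioi.mp hx)]
      have := (hg Z (ne_of_gt hZ0)).congr_of_eventuallyEq he
      simpa [hp, not_le.mpr h] using this
  have hSd : ∀ Z ∈ Ioi (0:ℝ), HasDerivAt S (s Z) Z := by
    intro Z hZ
    have hZ0 : (0:ℝ) < Z := hZ
    have hlog : ∀ x : ℝ, x ≠ 0 → HasDerivAt (fun y : ℝ => -Real.log y + 1) (-x⁻¹) x := by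
      intro x hx
      simpa using ((Real.hasDerivAt_log hx).neg.add_const 1)
    have hinv : ∀ x : ℝ, x ≠ 0 → HasDerivAt (fun y : ℝ => 1 / y) (-(x ^ 2)⁻¹) x := by
      intro x hx
      simpa [one_div] using (hasDerivAt_inv hx)
    rcases lt_trichotomy Z 1 with h | h | h
    · have he : S =ᶠ[nhds Z] fun y : ℝ => -Real.log y + 1 := by
        filter_upwards [Iio_mem_nhds h] with x hx
        simp [hS, (mem_Iio.mp hx).le]
      have := (hlog Z (ne_of_gt hZ0)).congr_of_eventuallyEq he
      simpa [hs, h.le] using this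
    · subst h
      have h1 : HasDerivWithinAt S (-1 : ℝ) (Iic 1) 1 := by
        have := (hlog 1 one_ne_zero).hasDerivWithinAt (s := Iic 1)
        rw [inv_one] at this
        refine this.congr ?_ (by simp [hS])
        intro x hx; simp [hS, (mem_Iic.mp hx)]
      have h2 : HasDerivWithinAt S (-1 : ℝ) (Ici 1) 1 := by
        have := (hinv 1 one_ne_zero).hasDerivWithinAt (s := Ici 1)
        rw [one_pow, inv_one] at this
        refine this.congr ?_ (by simp [hS])
        intro x hx
        rcases eq_or_lt_of_le (mem_Ici.mp hx) with h | h
        · rw [← h]; simp [hS]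
        · rw [hS, if_neg (not_le.mpr h)]
      have := (h1.union h2)
      rw [Iic_union_Ici, hasDerivWithinAt_univ] at this
      simpa [hs] using this
    · have he : S =ᶠ[nhds Z] fun y : ℝ => 1 / y := by
        filter_upwards [Ioi_mem_nhds h] with x hx
        simp [hS, not_le.mpr (mem_Ioi.mp hx)]
      have := (hinv Z (ne_of_gt hZ0)).congr_of_eventuallyEq he
      simpa [hs, not_le.mpr h] using this
  have hderivP : ∀ Z ∈ Ioi (0:ℝ), deriv P Z = p Z := fun Z hZ => (hPd Z hZ).deriv
  have hderivS : ∀ Z ∈ Ioi (0:ℝ), deriv S Z = s Z := fun Z hZ => (hSd Z hZ).deriv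
  -- continuity of the candidate derivatives
  have hpc : Continuous p := by
    refine Continuous.if_le continuous_const ?_ continuous_id continuous_const ?_
    · exact continuous_iff_continuousAt.mpr fun x =>
        Real.continuousAt_rpow_const x _ (Or.inr (by linarith))
    · intro x hx; simp [hx, Real.one_rpow]
  have hsc : ContinuousOn s (Ioi 0) := by
    have h1 : ContinuousOn (fun x : ℝ => x⁻¹) (Ioi 0) :=
      continuousOn_inv₀.mono (fun x hx => ne_of_gt hx)
    have h2 : ContinuousOn (fun x : ℝ => (x ^ 2)⁻¹) (Ioi 0) := by
      refine ContinuousOn.inv₀ (by fun_prop) ?_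
      intro x hx; exact pow_ne_zero 2 (ne_of_gt (mem_Ioi.mp hx))
    have hm : ContinuousOn (fun x : ℝ => -(min (x⁻¹) ((x ^ 2)⁻¹))) (Ioi 0) :=
      fun x hx => ((h1 x hx).min (h2 x hx)).neg
    refine hm.congr ?_
    intro x hx
    have hx0 : (0:ℝ) < x := hx
    by_cases h : x ≤ 1
    · have hsq : x ^ 2 ≤ x := by nlinarith
      have : x⁻¹ ≤ (x ^ 2)⁻¹ := by
        apply inv_anti₀ (by positivity) hsq
      simp [hs, h, min_eq_left this]
    · have hsq : x ≤ x ^ 2 := by nlinarith [not_le.mp h]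
      have : (x ^ 2)⁻¹ ≤ x⁻¹ := by
        apply inv_anti₀ hx0 hsq
      simp [hs, h, min_eq_right this]
  have hkey : ∀ Z : ℝ, 0 < Z → ¬ Z ≤ 1 → Z ^ (γ - 1) * Z = Z ^ γ := by
    intro Z hZ0 _
    nth_rewrite 2 [← Real.rpow_one Z]
    rw [← Real.rpow_add hZ0, sub_add_cancel]
  refine ⟨?_, ?_, ?_, ?_, ?_⟩
  · rw [show (1 : WithTop ℕ∞) = 0 + 1 by norm_num,
      contDiffOn_succ_iff_deriv_of_isOpen isOpen_Ioi]
    refine ⟨fun Z hZ => (hPd Z hZ).differentiableAt.differentiableWithinAt, by simp, ?_⟩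
    rw [contDiffOn_zero]
    exact hpc.continuousOn.congr hderivP
  · rw [show (1 : WithTop ℕ∞) = 0 + 1 by norm_num,
      contDiffOn_succ_iff_deriv_of_isOpen isOpen_Ioi]
    refine ⟨fun Z hZ => (hSd Z hZ).differentiableAt.differentiableWithinAt, by simp, ?_⟩
    rw [contDiffOn_zero]
    exact hsc.congr hderivS
  · intro Z hZ
    rw [hderivP Z hZ]
    by_cases h : Z ≤ 1
    · simp [hp, h]
    · simp only [hp, if_neg h]
      exact Real.rpow_pos_of_pos hZ _
  · intro Z hZ
    rw [hderivP Z hZ, hP]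
    by_cases h : Z ≤ 1
    · simp only [hp, if_pos h]
      nlinarith [show (0:ℝ) < Z from hZ]
    · simp only [hp, if_neg h]
      rw [hkey Z hZ h]
      have hZγ := Real.rpow_pos_of_pos (mem_Ioi.mp hZ) γ
      field_simp
      nlinarith
  · intro Z hZ
    have hZ0 : (0:ℝ) < Z := hZ
    have hγ1 : γ - 1 ≠ 0 := by linarith
    rw [hderivS Z hZ, hderivP Z hZ, hP]
    by_cases h : Z ≤ 1
    · simp only [hs, hp, if_pos h]
      field_simp
    · simp only [hs, hp, if_neg h]
      rw [hkey Z hZ h]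
      field_simp
      ring
end

section
/- Let γ > 1 and let P, S ∈ C¹(0,∞) satisfy S'(Z) = -(1/(γ-1))·(γP(Z) - P'(Z)Z)/Z². Define, for ρ, θ > 0, p(ρ,θ) = θ^{γ/(γ-1)} P(Z), e(ρ,θ) = (θ/(γ-1))·(θ^{1/(γ-1)}/ρ)·P(Z), s(ρ,θ) = S(Z), where Z = ρ θ^{-1/(γ-1)}. Then Gibbs' relation holds: θ ∂_θ s = ∂_θ e and θ ∂_ρ s = ∂_ρ e - (p/ρ²). -/
open Real Set

/-- Gibbs' relation for the complete polytropic equation of state: if the entropy scaling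
function `S` satisfies the ODE `S'(Z) = -(1/(γ-1)) (γ P(Z) - P'(Z) Z)/Z²`, then
`θ ∂_θ s = ∂_θ e` and `θ ∂_ρ s = ∂_ρ e - p/ρ²`. -/
theorem stmt_6 (γ : ℝ) (hγ : 1 < γ)
    (P S : ℝ → ℝ)
    (hPC : ContDiffOn ℝ 1 P (Set.Ioi 0)) (hSC : ContDiffOn ℝ 1 S (Set.Ioi 0))
    (hODE : ∀ Z > 0, deriv S Z = -(1 / (γ - 1)) * (γ * P Z - deriv P Z * Z) / Z ^ 2)
    (p e s : ℝ → ℝ → ℝ)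
    (hp : ∀ ρ θ : ℝ, p ρ θ = θ ^ (γ / (γ - 1)) * P (ρ * θ ^ (-(1 / (γ - 1)))))
    (he : ∀ ρ θ : ℝ, e ρ θ =
      θ / (γ - 1) * (θ ^ (1 / (γ - 1)) / ρ) * P (ρ * θ ^ (-(1 / (γ - 1)))))
    (hs : ∀ ρ θ : ℝ, s ρ θ = S (ρ * θ ^ (-(1 / (γ - 1))))) :
    ∀ ρ θ : ℝ, 0 < ρ → 0 < θ →
      θ * deriv (fun t => s ρ t) θ = deriv (fun t => e ρ t) θ ∧
      θ * deriv (fun r => s r θ) ρ = deriv (fun r => e r θ) ρ - p ρ θ / ρ ^ 2 := by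
  intro ρ θ hρ hθ
  have hγ1 : (0:ℝ) < γ - 1 := by linarith
  set α : ℝ := 1 / (γ - 1) with hα
  have hθne : θ ≠ 0 := ne_of_gt hθ
  have hρne : ρ ≠ 0 := ne_of_gt hρ
  set A : ℝ := θ ^ α with hA
  have hApos : 0 < A := Real.rpow_pos_of_pos hθ α
  have hAne : A ≠ 0 := hApos.ne'
  have e1 : θ ^ (-α) = A⁻¹ := by rw [Real.rpow_neg hθ.le]
  have e2 : θ ^ (α - 1) = A / θ := by rw [Real.rpow_sub hθ, Real.rpow_one]
  have e3 : θ ^ (-α - 1) = (A * θ)⁻¹ := by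
    rw [show -α - 1 = -(α + 1) by ring, Real.rpow_neg hθ.le, Real.rpow_add hθ, Real.rpow_one]
  have e4 : θ ^ (γ / (γ - 1)) = A * θ := by
    rw [show γ / (γ - 1) = α + 1 by rw [hα]; field_simp; ring, Real.rpow_add hθ, Real.rpow_one]
  set Z : ℝ := ρ * A⁻¹ with hZ
  have hZpos : 0 < Z := by positivity
  have hPd : HasDerivAt P (deriv P Z) Z :=
    ((hPC.differentiableOn one_ne_zero).differentiableAt (isOpen_Ioi.mem_nhds hZpos)).hasDerivAt
  have hSd : HasDerivAt S (deriv S Z) Z :=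
    ((hSC.differentiableOn one_ne_zero).differentiableAt (isOpen_Ioi.mem_nhds hZpos)).hasDerivAt
  -- inner function in θ
  have hpow : HasDerivAt (fun t : ℝ => ρ * t ^ (-α)) (ρ * (-α * (A * θ)⁻¹)) θ := by
    have h := (Real.hasDerivAt_rpow_const (p := -α) (Or.inl hθne)).const_mul ρ
    simpa [e3] using h
  have hZθ : ρ * θ ^ (-α) = Z := by rw [e1]
  -- θ-derivative of s
  have hsθ : HasDerivAt (fun t : ℝ => S (ρ * t ^ (-α)))
      (deriv S Z * (ρ * (-α * (A * θ)⁻¹))) θ := by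
    have hSd' : HasDerivAt S (deriv S Z) (ρ * θ ^ (-α)) := by rw [hZθ]; exact hSd
    simpa [Function.comp_def, hZθ] using hSd'.comp θ hpow
  -- θ-derivative of e
  have hf : HasDerivAt (fun t : ℝ => t / (γ - 1) * (t ^ α / ρ))
      (1 / (γ - 1) * (A / ρ) + θ / (γ - 1) * (α * (A / θ) / ρ)) θ := by
    have h1 : HasDerivAt (fun t : ℝ => t / (γ - 1)) (1 / (γ - 1)) θ := by
      simpa using (hasDerivAt_id θ).div_const (γ - 1)
    have h2 : HasDerivAt (fun t : ℝ => t ^ α / ρ) (α * (A / θ) / ρ) θ := by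
      have := (Real.hasDerivAt_rpow_const (p := α) (Or.inl hθne)).div_const ρ
      simpa [e2] using this
    simpa [Pi.mul_def] using h1.mul h2
  have hPcomp : HasDerivAt (fun t : ℝ => P (ρ * t ^ (-α)))
      (deriv P Z * (ρ * (-α * (A * θ)⁻¹))) θ := by
    have hPd' : HasDerivAt P (deriv P Z) (ρ * θ ^ (-α)) := by rw [hZθ]; exact hPd
    simpa [Function.comp_def, hZθ] using hPd'.comp θ hpow
  have heθ : HasDerivAt (fun t : ℝ => t / (γ - 1) * (t ^ α / ρ) * P (ρ * t ^ (-α)))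
      ((1 / (γ - 1) * (A / ρ) + θ / (γ - 1) * (α * (A / θ) / ρ)) * P Z
        + θ / (γ - 1) * (A / ρ) * (deriv P Z * (ρ * (-α * (A * θ)⁻¹)))) θ := by
    simpa [hA, hZθ, Pi.mul_def] using hf.mul hPcomp
  -- ρ-derivatives
  have hsρ : HasDerivAt (fun r : ℝ => S (r * θ ^ (-α))) (deriv S Z * A⁻¹) ρ := by
    have hlin : HasDerivAt (fun r : ℝ => r * θ ^ (-α)) (θ ^ (-α)) ρ := by
      simpa using (hasDerivAt_id ρ).mul_const (θ ^ (-α))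
    have hSd' : HasDerivAt S (deriv S Z) (ρ * θ ^ (-α)) := by rw [hZθ]; exact hSd
    simpa [Function.comp_def, hZθ, e1] using hSd'.comp ρ hlin
  have heρ : HasDerivAt (fun r : ℝ => θ / (γ - 1) * (θ ^ α / r) * P (r * θ ^ (-α)))
      ((θ / (γ - 1) * (A * (-(ρ ^ 2)⁻¹))) * P Z
        + θ / (γ - 1) * (A / ρ) * (deriv P Z * A⁻¹)) ρ := by
    have hg : HasDerivAt (fun r : ℝ => θ / (γ - 1) * (θ ^ α / r))
        (θ / (γ - 1) * (A * (-(ρ ^ 2)⁻¹))) ρ := by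
      have := ((hasDerivAt_inv hρne).const_mul (θ ^ α)).const_mul (θ / (γ - 1))
      simpa [hA, div_eq_mul_inv, mul_assoc] using this
    have hPc : HasDerivAt (fun r : ℝ => P (r * θ ^ (-α))) (deriv P Z * A⁻¹) ρ := by
      have hlin : HasDerivAt (fun r : ℝ => r * θ ^ (-α)) (θ ^ (-α)) ρ := by
        simpa using (hasDerivAt_id ρ).mul_const (θ ^ (-α))
      have hPd' : HasDerivAt P (deriv P Z) (ρ * θ ^ (-α)) := by rw [hZθ]; exact hPd
      simpa [Function.comp_def, hZθ, e1] using hPd'.comp ρ hlin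
    simpa [hA, hZθ, Pi.mul_def] using hg.mul hPc
  have hODEZ := hODE Z hZpos
  have hZA : Z = ρ / A := by rw [hZ, div_eq_mul_inv]
  constructor
  · have l1 : deriv (fun t => s ρ t) θ = deriv S Z * (ρ * (-α * (A * θ)⁻¹)) := by
      simp only [hs]; exact hsθ.deriv
    have l2 : deriv (fun t => e ρ t)  θ =
        (1 / (γ - 1) * (A / ρ) + θ / (γ - 1) * (α * (A / θ) / ρ)) * P Z
          + θ / (γ - 1) * (A / ρ) * (deriv P Z * (ρ * (-α * (A * θ)⁻¹))) := by
      simp only [he]; exact heθ.deriv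
    rw [l1, l2, hODEZ, hZA, hα]
    field_simp
    ring
  · have l1 : deriv (fun r => s r θ) ρ = deriv S Z * A⁻¹ := by
      simp only [hs]; exact hsρ.deriv
    have l2 : deriv (fun r => e r θ) ρ =
        (θ / (γ - 1) * (A * (-(ρ ^ 2)⁻¹))) * P Z
          + θ / (γ - 1) * (A / ρ) * (deriv P Z * A⁻¹) := by
      simp only [he]; exact heρ.deriv
    rw [l1, l2, hp, e4, hZθ, hODEZ, hZA, hα]
    field_simp
    ring
end

section
/- Let γ > 1 and let P ∈ C¹[0,∞) satisfy P(0) = 0, P(Z) = Z on [0, Z̲] for some Z̲ > 0, P'(Z) > 0 for Z > 0, and lim inf_{Z→∞} P(Z)/Z^γ > 0. Let e(ρ,θ) = (θ^{γ/(γ-1)}/((γ-1)ρ)) P(ρθ^{-1/(γ-1)}). Then there is a constant c > 0 such that ρ^γ + ρθ ≤ c · ρ e(ρ,θ) for all ρ, θ > 0. -/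
/-!
With `Z = ρ θ^{-1/(γ-1)}` one has `ρ^γ + ρθ = θ^{γ/(γ-1)} (Z^γ + Z)` and
`ρ e(ρ,θ) = θ^{γ/(γ-1)} P(Z) / (γ-1)`, so the estimate reduces to the one-variable bound
`Z^γ + Z ≤ C P(Z)` for `Z > 0`. The positive lower limit of `P(Z)/Z^γ` gives `P(Z) ≥ a Z^γ`
on some `[M, ∞)`, which handles large `Z`; on `(0, M]` monotonicity and linearity near zero
give `P(Z) ≥ min(Z, Z₀) ≥ (Z₀/M) Z`.
-/

open Real Set Filter

lemma rpow_add_self_le_mul_self {γ Z M : ℝ} (hγ : 1 ≤ γ) (hZ : 0 < Z) (hZM : Z ≤ M) :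
    Z ^ γ + Z ≤ (M ^ (γ - 1) + 1) * Z := by
  have hpow : Z ^ γ = Z ^ (γ - 1) * Z := by
    rw [rpow_sub_one hZ.ne', div_mul_cancel₀ _ hZ.ne']
  have : Z ^ (γ - 1) ≤ M ^ (γ - 1) := rpow_le_rpow hZ.le hZM (by linarith)
  rw [hpow, add_mul, one_mul]
  gcongr

lemma rpow_add_self_le_two_mul_rpow {γ Z : ℝ} (hγ : 1 ≤ γ) (hZ : 1 ≤ Z) :
    Z ^ γ + Z ≤ 2 * Z ^ γ := by
  linarith [self_le_rpow_of_one_le hZ hγ]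

lemma le_div_mul_min {Z Z₀ M : ℝ} (hZ₀ : 0 < Z₀) (hZ : 0 ≤ Z) (hZM : Z ≤ M) (hZ₀M : Z₀ ≤ M) :
    Z ≤ M / Z₀ * min Z Z₀ := by
  have hratio : 1 ≤ M / Z₀ := (one_le_div hZ₀).2 hZ₀M
  rcases min_cases Z Z₀ with ⟨hmin, -⟩ | ⟨hmin, -⟩
  · rw [hmin]; nlinarith
  · rw [hmin, div_mul_cancel₀ _ hZ₀.ne']; exact hZM

lemma min_le_of_monotoneOn_of_eq_self {P : ℝ → ℝ} {Z₀ Z : ℝ} (hZ₀ : 0 ≤ Z₀)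
    (hmono : MonotoneOn P (Ici 0)) (hlin : ∀ Z ∈ Icc 0 Z₀, P Z = Z) (hZ : 0 ≤ Z) :
    min Z Z₀ ≤ P Z := by
  rcases le_total Z Z₀ with h | h
  · rw [min_eq_left h, hlin Z ⟨hZ, h⟩]
  · rw [min_eq_right h, ← hlin Z₀ ⟨hZ₀, le_rfl⟩]
    exact hmono (mem_Ici.2 hZ₀) (mem_Ici.2 hZ) h

lemma exists_forall_le_of_pos_liminf {u : ℝ → ℝ} (hu : ∀ᶠ Z in atTop, 0 ≤ u Z)
    (hlim : 0 < liminf u atTop) : ∃ a > 0, ∀ᶠ Z in atTop, a ≤ u Z :=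
  ⟨liminf u atTop / 2, half_pos hlim,
    (eventually_lt_of_lt_liminf (half_lt_self hlim) (isBoundedUnder_of_eventually_ge hu)).mono
      fun _ h => h.le⟩

lemma exists_rpow_add_self_le_mul {γ Z₀ a : ℝ} {P : ℝ → ℝ} (hγ : 1 ≤ γ) (hZ₀ : 0 < Z₀)
    (hmono : MonotoneOn P (Ici 0)) (hlin : ∀ Z ∈ Icc 0 Z₀, P Z = Z) (ha : 0 < a)
    (hgrowth : ∀ᶠ Z in atTop, a * Z ^ γ ≤ P Z) :
    ∃ C > 0, ∀ Z > 0, Z ^ γ + Z ≤ C * P Z := by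
  obtain ⟨M₀, hM₀⟩ := eventually_atTop.1 hgrowth
  set M := max M₀ (max Z₀ 1)
  have hZ₀M : Z₀ ≤ M := le_max_of_le_right (le_max_left _ _)
  have hM : 1 ≤ M := le_max_of_le_right (le_max_right _ _)
  set C₁ := (M ^ (γ - 1) + 1) * (M / Z₀)
  have hC₁ : 0 < C₁ := by positivity
  have hC₂ : 0 < 2 / a := by positivity
  refine ⟨max C₁ (2 / a), lt_max_of_lt_left hC₁, fun Z hZ => ?_⟩
  have hPmin := min_le_of_monotoneOn_of_eq_self hZ₀.le hmono hlin hZ.le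
  have hPpos : 0 < P Z := (lt_min hZ hZ₀).trans_le hPmin
  rcases le_total Z M with hZM | hMZ
  · calc Z ^ γ + Z ≤ (M ^ (γ - 1) + 1) * Z := rpow_add_self_le_mul_self hγ hZ hZM
      _ ≤ (M ^ (γ - 1) + 1) * (M / Z₀ * P Z) := by
          gcongr
          exact (le_div_mul_min hZ₀ hZ.le hZM hZ₀M).trans (by gcongr)
      _ = C₁ * P Z := by ring
      _ ≤ max C₁ (2 / a) * P Z := by gcongr; exact le_max_left _ _
  · have hPlow : a * Z ^ γ ≤ P Z := hM₀ Z ((le_max_left _ _).trans hMZ)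
    calc Z ^ γ + Z ≤ 2 * Z ^ γ := rpow_add_self_le_two_mul_rpow hγ (hM.trans hMZ)
      _ = 2 / a * (a * Z ^ γ) := by field_simp
      _ ≤ 2 / a * P Z := by gcongr
      _ ≤ max C₁ (2 / a) * P Z := by gcongr; exact le_max_right _ _

lemma rpow_add_mul_eq_rpow_mul_scaled {γ ρ θ : ℝ} (hγ : γ ≠ 1) (hρ : 0 < ρ) (hθ : 0 < θ) :
    ρ ^ γ + ρ * θ = θ ^ (γ / (γ - 1)) *
      ((ρ * θ ^ (-(1 / (γ - 1)))) ^ γ + ρ * θ ^ (-(1 / (γ - 1)))) := by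
  have hγ' : γ - 1 ≠ 0 := sub_ne_zero.2 hγ
  have hexp₁ : γ / (γ - 1) + -(1 / (γ - 1)) * γ = 0 := by field_simp; ring
  have hexp₂ : γ / (γ - 1) + -(1 / (γ - 1)) = 1 := by field_simp; ring
  rw [mul_rpow hρ.le (rpow_nonneg hθ.le _), ← rpow_mul hθ.le, mul_add, mul_left_comm,
    ← rpow_add hθ, hexp₁, mul_left_comm, ← rpow_add hθ, hexp₂, rpow_zero, rpow_one, mul_one]

theorem stmt_8_general (γ : ℝ) (hγ : 1 < γ) (Z₀ : ℝ) (hZ₀ : 0 < Z₀)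
    (P : ℝ → ℝ) (hPC : ContDiffOn ℝ 1 P (Set.Ici 0))
    (hlin : ∀ Z ∈ Set.Icc (0 : ℝ) Z₀, P Z = Z)
    (hP' : ∀ Z > 0, 0 < deriv P Z)
    (hgrowth : 0 < Filter.liminf (fun Z => P Z / Z ^ γ) Filter.atTop)
    (e : ℝ → ℝ → ℝ)
    (he : ∀ ρ θ : ℝ, 0 < ρ → 0 < θ → e ρ θ =
      θ ^ (γ / (γ - 1)) / ((γ - 1) * ρ) * P (ρ * θ ^ (-(1 / (γ - 1))))) :
    ∃ c : ℝ, 0 < c ∧ ∀ ρ θ : ℝ, 0 < ρ → 0 < θ →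
      ρ ^ γ + ρ * θ ≤ c * (ρ * e ρ θ) := by
  have hmono : MonotoneOn P (Ici 0) :=
    (strictMonoOn_of_deriv_pos (convex_Ici 0) hPC.continuousOn fun Z hZ =>
      hP' Z (by rwa [interior_Ici] at hZ)).monotoneOn
  have hratio_nonneg : ∀ᶠ Z in atTop, 0 ≤ P Z / Z ^ γ := by
    filter_upwards [eventually_gt_atTop 0] with Z hZ
    have := min_le_of_monotoneOn_of_eq_self hZ₀.le hmono hlin hZ.le
    exact div_nonneg ((le_min hZ.le hZ₀.le).trans this) (rpow_nonneg hZ.le γ)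
  obtain ⟨a, ha, hratio⟩ := exists_forall_le_of_pos_liminf hratio_nonneg hgrowth
  have hlow : ∀ᶠ Z in atTop, a * Z ^ γ ≤ P Z := by
    filter_upwards [hratio, eventually_gt_atTop 0] with Z h hZ
    rwa [le_div_iff₀ (rpow_pos_of_pos hZ γ)] at h
  obtain ⟨C, hC, hbound⟩ := exists_rpow_add_self_le_mul hγ.le hZ₀ hmono hlin ha hlow
  have hγ₁ : 0 < γ - 1 := sub_pos.2 hγ
  refine ⟨C * (γ - 1), by positivity, fun ρ θ hρ hθ => ?_⟩
  rw [he ρ θ hρ hθ]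
  set Z := ρ * θ ^ (-(1 / (γ - 1)))
  calc ρ ^ γ + ρ * θ = θ ^ (γ / (γ - 1)) * (Z ^ γ + Z) :=
        rpow_add_mul_eq_rpow_mul_scaled hγ.ne' hρ hθ
    _ ≤ θ ^ (γ / (γ - 1)) * (C * P Z) := by
        gcongr
        exact hbound Z (by positivity)
    _ = C * (γ - 1) * (ρ * (θ ^ (γ / (γ - 1)) / ((γ - 1) * ρ) * P Z)) := by
        field_simp

/-- Coercivity estimate `ρ^γ + ρθ ≲ ρ e(ρ,θ)` for the internal energy of the
constructed equation of state. -/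
theorem stmt_8 (γ : ℝ) (hγ : 1 < γ) (Z₀ : ℝ) (hZ₀ : 0 < Z₀)
    (P : ℝ → ℝ) (hPC : ContDiffOn ℝ 1 P (Set.Ici 0))
    (hP0 : P 0 = 0)
    (hlin : ∀ Z ∈ Set.Icc (0 : ℝ) Z₀, P Z = Z)
    (hP' : ∀ Z > 0, 0 < deriv P Z)
    (hgrowth : 0 < Filter.liminf (fun Z => P Z / Z ^ γ) Filter.atTop)
    (e : ℝ → ℝ → ℝ)
    (he : ∀ ρ θ : ℝ, 0 < ρ → 0 < θ → e ρ θ =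
      θ ^ (γ / (γ - 1)) / ((γ - 1) * ρ) * P (ρ * θ ^ (-(1 / (γ - 1))))) :
    ∃ c : ℝ, 0 < c ∧ ∀ ρ θ : ℝ, 0 < ρ → 0 < θ →
      ρ ^ γ + ρ * θ ≤ c * (ρ * e ρ θ) :=
  stmt_8_general γ hγ Z₀ hZ₀ P hPC hlin hP' hgrowth e he
end
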